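/- arXiv:2407.05472 — 5 statements merged into one kernel-verified Lean document; each statement's English description precedes it below -/
import Mathlib

section
/- For every natural number N and reals h_1, ..., h_N in [0,1], one has the second-order Taylor identity for products: ∏_{i=1}^N (1 - h_i) = 1 - ∑_{i=1}^N h_i + ∑_{1 ≤ i, j ≤ N, i ≠ j} h_i h_j ∫_0^1 (1 - r) ∏_{k ≠ i, j} (1 - r h_k) dr, where the double sum ranges over ordered pairs (i,j) with i ≠ j and the product inside the integral ranges over all indices k in {1,...,N} \ {i,j}. -/
open MeasureTheory Finset

/-!
Put `F r = ∏ i (1 - r h i)`. Then `F 1` is the left-hand side, `F 0 = 1`, `F' 0 = -∑ h i`, and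
`F'' r = ∑_{i ≠ j} h i h j ∏_{k ≠ i, j} (1 - r h k)`, so the identity is Taylor's formula
`F 1 = F 0 + F' 0 + ∫_0^1 (1 - r) F'' r dr` with integral remainder.
-/

theorem eq_add_sub_smul_add_integral_sub_smul_of_hasDerivAt
    {E : Type*} [NormedAddCommGroup E] [NormedSpace ℝ E] [CompleteSpace E]
    {f f' f'' : ℝ → E} {a b : ℝ}
    (hf : ∀ r ∈ Set.uIcc a b, HasDerivAt f (f' r) r)
    (hf' : ∀ r ∈ Set.uIcc a b, HasDerivAt f' (f'' r) r)
    (hint : IntervalIntegrable (fun r => (b - r) • f'' r) volume a b) :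
    f b = f a + (b - a) • f' a + ∫ r in a..b, (b - r) • f'' r := by
  have hG : ∀ r ∈ Set.uIcc a b,
      HasDerivAt (fun r => (b - r) • f' r + f r) ((b - r) • f'' r) r := by
    intro r hr
    have hlin : HasDerivAt (fun r : ℝ => b - r) (-1) r := by
      simpa using (hasDerivAt_id r).const_sub b
    exact ((hlin.smul (hf' r hr)).add (hf r hr)).congr_deriv (by simp)
  rw [intervalIntegral.integral_eq_sub_of_hasDerivAt hG hint]
  simp only [sub_self, zero_smul, zero_add]
  abel

section ProductOfAffine

variable {ι 𝕜 : Type*} [DecidableEq ι] [NontriviallyNormedField 𝕜] (h : ι → 𝕜)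

theorem hasDerivAt_prod_one_sub_mul (s : Finset ι) (r : 𝕜) :
    HasDerivAt (fun r => ∏ k ∈ s, (1 - r * h k))
      (-∑ j ∈ s, h j * ∏ k ∈ s.erase j, (1 - r * h k)) r := by
  have hfac : ∀ k ∈ s, HasDerivAt (fun r => 1 - r * h k) (-h k) r := fun k _ => by
    simpa using ((hasDerivAt_id r).mul_const (h k)).const_sub 1
  refine (HasDerivAt.fun_finsetProd hfac).congr_deriv ?_
  rw [← sum_neg_distrib]
  exact sum_congr rfl fun j _ => by rw [smul_eq_mul]; ring

theorem hasDerivAt_neg_sum_mul_prod_erase_one_sub_mul (s : Finset ι) (r : 𝕜) :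
    HasDerivAt (fun r => -∑ j ∈ s, h j * ∏ k ∈ s.erase j, (1 - r * h k))
      (∑ i ∈ s, ∑ j ∈ s.erase i,
        h i * h j * ∏ k ∈ (s.erase i).erase j, (1 - r * h k)) r := by
  refine (HasDerivAt.fun_sum fun i _ =>
    (hasDerivAt_prod_one_sub_mul h (s.erase i) r).const_mul (h i)).neg.congr_deriv ?_
  simp only [mul_neg, sum_neg_distrib, neg_neg, mul_sum, mul_assoc]

end ProductOfAffine

theorem integral_one_sub_mul_sum_sum_eq_sum_sum_mul_integral
    {ι : Type*} [DecidableEq ι] [Fintype ι] (h : ι → ℝ) :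
    ∫ r in (0:ℝ)..1, (1 - r) * ∑ i, ∑ j ∈ univ.erase i,
        h i * h j * ∏ k ∈ (univ.erase i).erase j, (1 - r * h k) =
      ∑ i, ∑ j ∈ univ.erase i, h i * h j *
        ∫ r in (0:ℝ)..1, (1 - r) * ∏ k ∈ (univ.erase i).erase j, (1 - r * h k) := by
  calc _ = ∫ r in (0:ℝ)..1, ∑ i, ∑ j ∈ univ.erase i,
          h i * h j * ((1 - r) * ∏ k ∈ (univ.erase i).erase j, (1 - r * h k)) := by
        congr 1 with r
        simp only [mul_sum]
        exact sum_congr rfl fun i _ => sum_congr rfl fun j _ => by ring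
    _ = ∑ i, ∑ j ∈ univ.erase i, ∫ r in (0:ℝ)..1,
          h i * h j * ((1 - r) * ∏ k ∈ (univ.erase i).erase j, (1 - r * h k)) := by
        rw [intervalIntegral.integral_finsetSum fun i _ =>
          (by fun_prop : Continuous _).intervalIntegrable 0 1]
        exact sum_congr rfl fun i _ => intervalIntegral.integral_finsetSum fun j _ =>
          (by fun_prop : Continuous _).intervalIntegrable 0 1
    _ = _ := by simp only [intervalIntegral.integral_const_mul]

theorem product_second_order_taylor_identity_general (N : ℕ) (h : Fin N → ℝ) :
    ∏ i, (1 - h i) =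
      1 - ∑ i, h i +
        ∑ i, ∑ j ∈ Finset.univ.erase i,
          h i * h j *
            ∫ r in (0:ℝ)..1, (1 - r) * ∏ k ∈ (Finset.univ.erase i).erase j, (1 - r * h k) := by
  have htaylor := eq_add_sub_smul_add_integral_sub_smul_of_hasDerivAt (a := 0) (b := 1)
    (fun r _ => hasDerivAt_prod_one_sub_mul h univ r)
    (fun r _ => hasDerivAt_neg_sum_mul_prod_erase_one_sub_mul h univ r)
    (Continuous.intervalIntegrable (by fun_prop) 0 1)
  simp only [smul_eq_mul, integral_one_sub_mul_sum_sum_eq_sum_sum_mul_integral] at htaylor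
  simpa [sub_eq_add_neg] using htaylor

/-- Second-order Taylor identity for products: for `h i ∈ [0,1]`,
`∏ (1 - h i) = 1 - ∑ h i + ∑_{i ≠ j} h i h j ∫_0^1 (1-r) ∏_{k ≠ i,j} (1 - r h k) dr`. -/
theorem product_second_order_taylor_identity (N : ℕ) (h : Fin N → ℝ)
    (hh : ∀ i, h i ∈ Set.Icc (0 : ℝ) 1) :
    ∏ i, (1 - h i) =
      1 - ∑ i, h i +
        ∑ i, ∑ j ∈ Finset.univ.erase i,
          h i * h j *
            ∫ r in (0:ℝ)..1, (1 - r) * ∏ k ∈ (Finset.univ.erase i).erase j, (1 - r * h k) :=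
  product_second_order_taylor_identity_general N h
end

section
/- Let M ≥ 2 be a natural number. For every natural number N with N ≤ M and reals z_1, ..., z_N in [0, 1/2], one has ∏_{i=1}^N (1 - z_i) - 1 + ∑_{i=1}^N z_i ≥ 2^{-M} ∑_{1 ≤ i, j ≤ N, i ≠ j} z_i z_j, where the double sum ranges over ordered pairs (i,j) with i ≠ j. -/
open Finset

private lemma aux_prod_lb {ι : Type*} (s : Finset ι) (z : ι → ℝ)
    (hz : ∀ i ∈ s, z i ∈ Set.Icc (0 : ℝ) (1 / 2)) :
    (2 : ℝ)⁻¹ ^ s.card ≤ ∏ i ∈ s, (1 - z i) := by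
  rw [← Finset.prod_const]
  refine Finset.prod_le_prod (fun i _ => by norm_num) (fun i hi => ?_)
  have := (hz i hi).2
  linarith

private lemma aux_prod_ub {ι : Type*} (s : Finset ι) (z : ι → ℝ)
    (hz : ∀ i ∈ s, z i ∈ Set.Icc (0 : ℝ) (1 / 2)) :
    ∏ i ∈ s, (1 - z i) ≤ 1 :=
  Finset.prod_le_one (fun i hi => by have := (hz i hi).2; linarith)
    (fun i hi => by have := (hz i hi).1; linarith)

private lemma aux_one_sub_prod {ι : Type*} [DecidableEq ι] (s : Finset ι) (z : ι → ℝ)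
    (hz : ∀ i ∈ s, z i ∈ Set.Icc (0 : ℝ) (1 / 2)) :
    (2 : ℝ)⁻¹ ^ s.card * ∑ i ∈ s, z i ≤ 1 - ∏ i ∈ s, (1 - z i) := by
  induction s using Finset.induction_on with
  | empty => simp
  | @insert a s ha ih =>
    have hz' : ∀ i ∈ s, z i ∈ Set.Icc (0 : ℝ) (1 / 2) :=
      fun i hi => hz i (Finset.mem_insert_of_mem hi)
    have hza := hz a (Finset.mem_insert_self a s)
    have hprod := aux_prod_lb s z hz'
    have hub := aux_prod_ub s z hz'
    have ihs := ih hz'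
    rw [Finset.sum_insert ha, Finset.prod_insert ha, Finset.card_insert_of_notMem ha,
      pow_succ]
    have hS : 0 ≤ ∑ i ∈ s, z i := Finset.sum_nonneg fun i hi => (hz' i hi).1
    have hp : (0:ℝ) < (2:ℝ)⁻¹ ^ s.card := by positivity
    nlinarith [hza.1, hza.2, mul_le_mul_of_nonneg_left hprod hza.1]

private lemma aux_main {ι : Type*} [DecidableEq ι] (M : ℕ) (s : Finset ι) (hs : s.card ≤ M)
    (z : ι → ℝ) (hz : ∀ i ∈ s, z i ∈ Set.Icc (0 : ℝ) (1 / 2)) :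
    ((2 : ℝ) ^ M)⁻¹ * ∑ i ∈ s, ∑ j ∈ s.erase i, z i * z j ≤
      ∏ i ∈ s, (1 - z i) - 1 + ∑ i ∈ s, z i := by
  induction s using Finset.induction_on with
  | empty => simp
  | @insert a s ha ih =>
    have hz' : ∀ i ∈ s, z i ∈ Set.Icc (0 : ℝ) (1 / 2) :=
      fun i hi => hz i (Finset.mem_insert_of_mem hi)
    have hza := hz a (Finset.mem_insert_self a s)
    have hcard : s.card + 1 ≤ M := by
      rwa [← Finset.card_insert_of_notMem ha]
    have ihs := ih (le_trans (Nat.le_succ _) hcard) hz'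
    have hone := aux_one_sub_prod s z hz'
    have hS : 0 ≤ ∑ i ∈ s, z i := Finset.sum_nonneg fun i hi => (hz' i hi).1
    -- rewrite the double sum
    have hsum : ∑ i ∈ insert a s, ∑ j ∈ (insert a s).erase i, z i * z j
        = (∑ i ∈ s, ∑ j ∈ s.erase i, z i * z j) + 2 * (z a * ∑ i ∈ s, z i) := by
      rw [Finset.sum_insert ha, Finset.erase_insert ha]
      have h2 : ∀ i ∈ s, ∑ j ∈ (insert a s).erase i, z i * z j
          = z i * z a + ∑ j ∈ s.erase i, z i * z j := by
        intro i hi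
        rw [Finset.erase_insert_of_ne (by rintro rfl; exact ha hi),
          Finset.sum_insert (fun h => ha (Finset.mem_of_mem_erase h))]
      rw [Finset.sum_congr rfl h2, Finset.sum_add_distrib, ← Finset.sum_mul,
        ← Finset.mul_sum]
      ring
    rw [hsum, Finset.sum_insert ha, Finset.prod_insert ha]
    -- key power inequality
    have hpow : (2 : ℝ) * ((2 : ℝ) ^ M)⁻¹ ≤ (2 : ℝ)⁻¹ ^ s.card := by
      have hc : (2:ℝ) ^ s.card * 2 ≤ 2 ^ M := by
        rw [← pow_succ]
        exact pow_le_pow_right₀ one_le_two hcard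
      have hpos : (0:ℝ) < 2 ^ s.card := by positivity
      have hMpos : (0:ℝ) < 2 ^ M := by positivity
      rw [inv_pow, inv_eq_one_div, inv_eq_one_div, mul_one_div,
        div_le_div_iff₀ hMpos hpos]
      linarith
    have key : 2 * ((2 : ℝ) ^ M)⁻¹ * (z a * ∑ i ∈ s, z i)
        ≤ z a * (1 - ∏ i ∈ s, (1 - z i)) := by
      have h1 : 2 * ((2 : ℝ) ^ M)⁻¹ * (z a * ∑ i ∈ s, z i)
          ≤ (2 : ℝ)⁻¹ ^ s.card * (z a * ∑ i ∈ s, z i) :=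
        mul_le_mul_of_nonneg_right hpow (mul_nonneg hza.1 hS)
      have h2 : (2 : ℝ)⁻¹ ^ s.card * (z a * ∑ i ∈ s, z i)
          = z a * ((2 : ℝ)⁻¹ ^ s.card * ∑ i ∈ s, z i) := by ring
      have h3 := mul_le_mul_of_nonneg_left hone hza.1
      linarith [h2.le, h2.ge]
    have expand : ((2 : ℝ) ^ M)⁻¹ * ((∑ i ∈ s, ∑ j ∈ s.erase i, z i * z j)
          + 2 * (z a * ∑ i ∈ s, z i))
        = ((2 : ℝ) ^ M)⁻¹ * (∑ i ∈ s, ∑ j ∈ s.erase i, z i * z j)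
          + 2 * ((2 : ℝ) ^ M)⁻¹ * (z a * ∑ i ∈ s, z i) := by ring
    have expand2 : (1 - z a) * ∏ i ∈ s, (1 - z i) - 1 + (z a + ∑ i ∈ s, z i)
        = (∏ i ∈ s, (1 - z i) - 1 + ∑ i ∈ s, z i)
          + z a * (1 - ∏ i ∈ s, (1 - z i)) := by ring
    linarith [expand.le, expand.ge, expand2.le, expand2.ge]

/-- For `M ≥ 2`, `N ≤ M` and `z i ∈ [0, 1/2]`,
`∏ (1 - z i) - 1 + ∑ z i ≥ 2^{-M} ∑_{i ≠ j} z i z j` (ordered pairs). -/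
theorem product_one_sub_sub_one_add_sum_ge_offdiag (M : ℕ) (hM : 2 ≤ M)
    (N : ℕ) (hN : N ≤ M) (z : Fin N → ℝ)
    (hz : ∀ i, z i ∈ Set.Icc (0 : ℝ) (1 / 2)) :
    ((2 : ℝ) ^ M)⁻¹ * ∑ i, ∑ j ∈ Finset.univ.erase i, z i * z j ≤
      ∏ i, (1 - z i) - 1 + ∑ i, z i := by
  have := aux_main M (Finset.univ : Finset (Fin N))
    (by simpa using hN) z (fun i _ => hz i)
  simpa using this
end

section
/- Let δ ∈ (0,1]. For every natural number N and reals z_1, ..., z_N with 0 ≤ z_i ≤ δ for all i, one has | ∏_{i=1}^N (1 - z_i) - 1 + ∑_{i=1}^N z_i - (1/2) ∑_{1 ≤ i, j ≤ N, i ≠ j} z_i z_j | ≤ (1/2) min(N δ, 1) ∑_{1 ≤ i, j ≤ N, i ≠ j} z_i z_j, where the double sums range over ordered pairs (i,j) with i ≠ j. -/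
open Finset

variable {ι : Type*} [DecidableEq ι]

/-- Ordered-pair second symmetric sum. -/
noncomputable def Tsum (z : ι → ℝ) (s : Finset ι) : ℝ :=
  ∑ i ∈ s, ∑ j ∈ s.erase i, z i * z j

/-- Ordered-triple third symmetric sum (as `∑ z i * Tsum (erase i)`). -/
noncomputable def Esum (z : ι → ℝ) (s : Finset ι) : ℝ :=
  ∑ i ∈ s, z i * Tsum z (s.erase i)

lemma Tsum_eq (z : ι → ℝ) (s : Finset ι) :
    Tsum z s = ∑ i ∈ s, z i * ((∑ j ∈ s, z j) - z i) := by
  unfold Tsum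
  refine Finset.sum_congr rfl fun i hi => ?_
  rw [← Finset.mul_sum, Finset.sum_erase_eq_sub hi]

lemma Tsum_insert (z : ι → ℝ) {a : ι} {s : Finset ι} (ha : a ∉ s) :
    Tsum z (insert a s) = Tsum z s + 2 * z a * ∑ i ∈ s, z i := by
  unfold Tsum
  rw [Finset.sum_insert ha, Finset.erase_insert ha]
  have h1 : ∀ i ∈ s, ∑ j ∈ (insert a s).erase i, z i * z j
      = z i * z a + ∑ j ∈ s.erase i, z i * z j := by
    intro i hi
    have hai : a ≠ i := fun h => ha (h ▸ hi)
    rw [Finset.erase_insert_of_ne hai,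
      Finset.sum_insert (fun h => ha (Finset.mem_of_mem_erase h))]
  rw [Finset.sum_congr rfl h1, Finset.sum_add_distrib, ← Finset.sum_mul, ← Finset.mul_sum]
  ring

lemma Tsum_nonneg {z : ι → ℝ} {s : Finset ι} (hz : ∀ i ∈ s, 0 ≤ z i) :
    0 ≤ Tsum z s := by
  refine Finset.sum_nonneg fun i hi => Finset.sum_nonneg fun j hj => ?_
  exact mul_nonneg (hz i hi) (hz j (Finset.mem_of_mem_erase hj))

lemma Tsum_mono {z : ι → ℝ} {s t : Finset ι} (hst : s ⊆ t) (hz : ∀ i ∈ t, 0 ≤ z i) :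
    Tsum z s ≤ Tsum z t := by
  unfold Tsum
  refine le_trans (Finset.sum_le_sum fun i hi => ?_)
    (Finset.sum_le_sum_of_subset_of_nonneg hst fun i hi _ => ?_)
  · refine Finset.sum_le_sum_of_subset_of_nonneg (Finset.erase_subset_erase _ hst)
      fun j hj _ => mul_nonneg (hz i (hst hi)) (hz j (Finset.mem_of_mem_erase hj))
  · exact Finset.sum_nonneg fun j hj =>
      mul_nonneg (hz i hi) (hz j (Finset.mem_of_mem_erase hj))

lemma Esum_nonneg {z : ι → ℝ} {s : Finset ι} (hz : ∀ i ∈ s, 0 ≤ z i) :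
    0 ≤ Esum z s :=
  Finset.sum_nonneg fun i hi => mul_nonneg (hz i hi)
    (Tsum_nonneg fun j hj => hz j (Finset.mem_of_mem_erase hj))

lemma Esum_insert (z : ι → ℝ) {a : ι} {s : Finset ι} (ha : a ∉ s) :
    Esum z (insert a s) = Esum z s + 3 * z a * Tsum z s := by
  unfold Esum
  rw [Finset.sum_insert ha, Finset.erase_insert ha]
  have h1 : ∀ i ∈ s, z i * Tsum z ((insert a s).erase i)
      = z i * Tsum z (s.erase i) + 2 * z a * (z i * ((∑ j ∈ s, z j) - z i)) := by
    intro i hi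
    have hai : a ≠ i := fun h => ha (h ▸ hi)
    rw [Finset.erase_insert_of_ne hai,
      Tsum_insert z (fun h => ha (Finset.mem_of_mem_erase h)),
      Finset.sum_erase_eq_sub hi]
    ring
  rw [Finset.sum_congr rfl h1, Finset.sum_add_distrib, ← Finset.mul_sum, ← Tsum_eq]
  ring

lemma Esum_le (z : ι → ℝ) (s : Finset ι) (hz : ∀ i ∈ s, 0 ≤ z i) :
    Esum z s ≤ (∑ i ∈ s, z i) * Tsum z s := by
  rw [Finset.sum_mul]
  refine Finset.sum_le_sum fun i hi => ?_
  exact mul_le_mul_of_nonneg_left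
    (Tsum_mono (Finset.erase_subset _ _) hz) (hz i hi)

/-- The key sandwich, by induction on the finset. -/
lemma prod_sandwich (z : ι → ℝ) (s : Finset ι) (hz : ∀ i ∈ s, 0 ≤ z i ∧ z i ≤ 1) :
    (1 - ∑ i ∈ s, z i ≤ ∏ i ∈ s, (1 - z i)) ∧
    (1 - (∑ i ∈ s, z i) + Tsum z s / 2 - Esum z s / 6 ≤ ∏ i ∈ s, (1 - z i)) ∧
    (∏ i ∈ s, (1 - z i) ≤ 1 - (∑ i ∈ s, z i) + Tsum z s / 2) := by
  induction s using Finset.induction_on with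
  | empty => simp [Tsum, Esum]
  | @insert a s ha ih =>
    obtain ⟨hza0, hza1⟩ := hz a (Finset.mem_insert_self a s)
    have hz' : ∀ i ∈ s, 0 ≤ z i ∧ z i ≤ 1 := fun i hi => hz i (Finset.mem_insert_of_mem hi)
    obtain ⟨ih1, ih2, ih3⟩ := ih hz'
    have hS0 : 0 ≤ ∑ i ∈ s, z i := Finset.sum_nonneg fun i hi => (hz' i hi).1
    have hT0 : 0 ≤ Tsum z s := Tsum_nonneg fun i hi => (hz' i hi).1
    have hE0 : 0 ≤ Esum z s := Esum_nonneg fun i hi => (hz' i hi).1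
    have hP0 : 0 ≤ ∏ i ∈ s, (1 - z i) :=
      Finset.prod_nonneg fun i hi => by linarith [(hz' i hi).2]
    rw [Finset.prod_insert ha, Finset.sum_insert ha, Tsum_insert z ha, Esum_insert z ha]
    have h1a : 0 ≤ 1 - z a := by linarith
    refine ⟨?_, ?_, ?_⟩
    · nlinarith [mul_le_mul_of_nonneg_left ih1 h1a]
    · nlinarith [mul_le_mul_of_nonneg_left ih2 h1a]
    · nlinarith [mul_le_mul_of_nonneg_left ih3 h1a]

/-- For `δ ∈ (0,1]` and `0 ≤ z i ≤ δ`,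
`|∏ (1 - z i) - 1 + ∑ z i - (1/2) ∑_{i ≠ j} z i z j| ≤ (1/2) min(N δ, 1) ∑_{i ≠ j} z i z j`. -/
theorem product_second_order_approx (δ : ℝ) (hδ : δ ∈ Set.Ioc (0 : ℝ) 1)
    (N : ℕ) (z : Fin N → ℝ) (hz : ∀ i, 0 ≤ z i ∧ z i ≤ δ) :
    |∏ i, (1 - z i) - 1 + ∑ i, z i -
        (1 / 2) * ∑ i, ∑ j ∈ Finset.univ.erase i, z i * z j| ≤
      (1 / 2) * min ((N : ℝ) * δ) 1 * ∑ i, ∑ j ∈ Finset.univ.erase i, z i * z j := by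
  obtain ⟨hδ0, hδ1⟩ := hδ
  have hz1 : ∀ i ∈ (Finset.univ : Finset (Fin N)), 0 ≤ z i ∧ z i ≤ 1 :=
    fun i _ => ⟨(hz i).1, le_trans (hz i).2 hδ1⟩
  have hz0 : ∀ i ∈ (Finset.univ : Finset (Fin N)), 0 ≤ z i := fun i hi => (hz1 i hi).1
  obtain ⟨h1, h2, h3⟩ := prod_sandwich z Finset.univ hz1
  have hT : (∑ i, ∑ j ∈ Finset.univ.erase i, z i * z j) = Tsum z Finset.univ := rfl
  rw [hT]
  have hT0 : 0 ≤ Tsum z Finset.univ := Tsum_nonneg hz0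
  have hE0 : 0 ≤ Esum z Finset.univ := Esum_nonneg hz0
  have hSN : ∑ i, z i ≤ (N : ℝ) * δ := by
    calc ∑ i, z i ≤ ∑ _i : Fin N, δ := Finset.sum_le_sum fun i _ => (hz i).2
    _ = (N : ℝ) * δ := by simp [mul_comm]
  have hEle : Esum z Finset.univ ≤ (∑ i, z i) * Tsum z Finset.univ :=
    Esum_le z Finset.univ hz0
  rw [abs_le]
  constructor
  · -- lower bound
    rcases le_total ((N : ℝ) * δ) 1 with hmin | hmin
    · rw [min_eq_left hmin]
      have : Esum z Finset.univ ≤ (N : ℝ) * δ * Tsum z Finset.univ :=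
        le_trans hEle (mul_le_mul_of_nonneg_right hSN hT0)
      nlinarith
    · rw [min_eq_right hmin]
      have hNδ0 : 0 ≤ (N : ℝ) * δ := by positivity
      nlinarith
  · have hm0 : 0 ≤ min ((N : ℝ) * δ) 1 := le_min (by positivity) zero_le_one
    nlinarith
end

section
/- Let (Ω, F, P) be a probability space and W : Ω → [0, ∞) a measurable function, and let z₀ > 0. Then ∫_0^{z₀} z^{-1} ∫_Ω (1 - e^{-z W(ω)}) dP(ω) dz < ∞ if and only if ∫_Ω log(1 + W) dP < ∞. -/
/-!
By Tonelli the double integral is `E[Ein (z₀ W)]`, where `Ein x = ∫_0^x (1 - e^{-t}) dt / t`.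
The bounds `u / (1 + u) ≤ 1 - e^{-u} ≤ 2u / (1 + u)` put `Ein x` between `log (1 + x)` and
`2 log (1 + x)`, and `log (1 + z₀ w)` differs from `log (1 + w)` by at most `|log z₀|`.
-/

open MeasureTheory Real Set
open scoped ENNReal

lemma div_one_add_le_one_sub_exp_neg {u : ℝ} (hu : 0 ≤ u) : u / (1 + u) ≤ 1 - exp (-u) := by
  have hexp : exp (-u) ≤ (1 + u)⁻¹ := by
    rw [exp_neg]
    exact inv_anti₀ (by positivity) (by linarith [add_one_le_exp u])
  have hdiv : u / (1 + u) = 1 - (1 + u)⁻¹ := by field_simp; ring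
  linarith

lemma one_sub_exp_neg_le_two_mul_div_one_add {u : ℝ} (hu : 0 ≤ u) :
    1 - exp (-u) ≤ 2 * (u / (1 + u)) := by
  rw [mul_div_assoc', le_div_iff₀ (by positivity)]
  rcases le_total u 1 with h | h
  · nlinarith [add_one_le_exp (-u), exp_nonneg (-u)]
  · nlinarith [exp_nonneg (-u), mul_nonneg (exp_nonneg (-u)) hu]

lemma integral_div_one_add_mul {z₀ w : ℝ} (hz₀ : 0 ≤ z₀) (hw : 0 ≤ w) :
    ∫ z in 0..z₀, w / (1 + w * z) = log (1 + w * z₀) := by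
  have hsubst := intervalIntegral.mul_integral_comp_add_mul (f := fun x : ℝ => x⁻¹)
    (c := w) (d := 1) (a := 0) (b := z₀)
  simp only [mul_zero, add_zero] at hsubst
  rw [integral_inv_of_pos one_pos (by positivity), div_one] at hsubst
  simpa only [div_eq_mul_inv, intervalIntegral.integral_const_mul] using hsubst

lemma lintegral_div_one_add_mul {z₀ w : ℝ} (hz₀ : 0 ≤ z₀) (hw : 0 ≤ w) :
    ∫⁻ z in Ioo 0 z₀, ENNReal.ofReal (w / (1 + w * z)) = ENNReal.ofReal (log (1 + w * z₀)) := by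
  have hcont : ContinuousOn (fun z : ℝ => w / (1 + w * z)) (Icc 0 z₀) :=
    continuousOn_const.div (by fun_prop) fun z hz => by nlinarith [mul_nonneg hw hz.1]
  rw [← ofReal_integral_eq_lintegral_ofReal
      (hcont.integrableOn_Icc.mono_set Ioo_subset_Icc_self)
      ((ae_restrict_iff' measurableSet_Ioo).2 (ae_of_all _ fun z hz => by
        have : 0 ≤ w * z := mul_nonneg hw hz.1.le
        positivity)),
    ← integral_Ioc_eq_integral_Ioo, ← intervalIntegral.integral_of_le hz₀,
    integral_div_one_add_mul hz₀ hw]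

lemma div_one_add_mul_le_inv_mul_one_sub_exp {z w : ℝ} (hz : 0 < z) (hw : 0 ≤ w) :
    w / (1 + w * z) ≤ z⁻¹ * (1 - exp (-(z * w))) := by
  have key := div_one_add_le_one_sub_exp_neg (mul_nonneg hz.le hw)
  calc w / (1 + w * z) = z⁻¹ * (z * w / (1 + z * w)) := by field_simp
    _ ≤ z⁻¹ * (1 - exp (-(z * w))) := by gcongr

lemma inv_mul_one_sub_exp_le_two_mul_div_one_add_mul {z w : ℝ} (hz : 0 < z) (hw : 0 ≤ w) :
    z⁻¹ * (1 - exp (-(z * w))) ≤ 2 * (w / (1 + w * z)) := by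
  have key := one_sub_exp_neg_le_two_mul_div_one_add (mul_nonneg hz.le hw)
  calc z⁻¹ * (1 - exp (-(z * w))) ≤ z⁻¹ * (2 * (z * w / (1 + z * w))) := by gcongr
    _ = 2 * (w / (1 + w * z)) := by field_simp

/-- `einIntegral z₀ w = Ein (z₀ * w)`, by the substitution `t = z w`. -/
noncomputable def einIntegral (z₀ w : ℝ) : ℝ≥0∞ :=
  ∫⁻ z in Ioo 0 z₀, ENNReal.ofReal z⁻¹ * ENNReal.ofReal (1 - exp (-(z * w)))

lemma ofReal_log_le_einIntegral {z₀ w : ℝ} (hz₀ : 0 ≤ z₀) (hw : 0 ≤ w) :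
    ENNReal.ofReal (log (1 + w * z₀)) ≤ einIntegral z₀ w := by
  rw [← lintegral_div_one_add_mul hz₀ hw]
  refine setLIntegral_mono' measurableSet_Ioo fun z hz => ?_
  rw [← ENNReal.ofReal_mul (inv_nonneg.2 hz.1.le)]
  exact ENNReal.ofReal_le_ofReal (div_one_add_mul_le_inv_mul_one_sub_exp hz.1 hw)

lemma einIntegral_le_two_mul_ofReal_log {z₀ w : ℝ} (hz₀ : 0 ≤ z₀) (hw : 0 ≤ w) :
    einIntegral z₀ w ≤ 2 * ENNReal.ofReal (log (1 + w * z₀)) := by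
  rw [← lintegral_div_one_add_mul hz₀ hw, ← lintegral_const_mul' _ _ ENNReal.ofNat_ne_top]
  refine setLIntegral_mono' measurableSet_Ioo fun z hz => ?_
  rw [← ENNReal.ofReal_mul (inv_nonneg.2 hz.1.le), ← ENNReal.ofReal_ofNat 2,
    ← ENNReal.ofReal_mul zero_le_two]
  exact ENNReal.ofReal_le_ofReal (inv_mul_one_sub_exp_le_two_mul_div_one_add_mul hz.1 hw)

lemma ofReal_log_one_add_mul_le {c w : ℝ} (hc : 0 < c) (hw : 0 ≤ w) :
    ENNReal.ofReal (log (1 + w * c)) ≤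
      ENNReal.ofReal (log (1 + w)) + ENNReal.ofReal (log (max 1 c)) := by
  have hbound : 1 + w * c ≤ (1 + w) * max 1 c := by
    nlinarith [le_max_left 1 c, le_max_right 1 c]
  calc ENNReal.ofReal (log (1 + w * c))
      ≤ ENNReal.ofReal (log ((1 + w) * max 1 c)) :=
        ENNReal.ofReal_le_ofReal (log_le_log (by positivity) hbound)
    _ ≤ _ := by
        rw [log_mul (by positivity) (by positivity)]
        exact ENNReal.ofReal_add_le

lemma lintegral_lt_top_of_le_mul_add {α : Type*} [MeasurableSpace α] {μ : Measure α}
    [IsFiniteMeasure μ] {f g : α → ℝ≥0∞} {C D : ℝ≥0∞} (hC : C ≠ ⊤) (hD : D ≠ ⊤)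
    (hfg : ∀ x, f x ≤ C * g x + D) (hg : ∫⁻ x, g x ∂μ < ⊤) : ∫⁻ x, f x ∂μ < ⊤ :=
  calc ∫⁻ x, f x ∂μ ≤ ∫⁻ x, C * g x + D ∂μ := lintegral_mono hfg
    _ = C * ∫⁻ x, g x ∂μ + D * μ univ := by
        rw [lintegral_add_right _ measurable_const, lintegral_const, lintegral_const_mul' _ _ hC]
    _ < ⊤ := by
        have := measure_lt_top μ univ
        finiteness

lemma lintegral_inv_mul_lintegral_one_sub_exp {Ω : Type*} [MeasurableSpace Ω] (P : Measure Ω)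
    [SFinite P] {W : Ω → ℝ} (hW : Measurable W) (z₀ : ℝ) :
    ∫⁻ z in Ioo 0 z₀, ENNReal.ofReal z⁻¹ * ∫⁻ ω, ENNReal.ofReal (1 - exp (-(z * W ω))) ∂P =
      ∫⁻ ω, einIntegral z₀ (W ω) ∂P := by
  simp_rw [← lintegral_const_mul' _ _ ENNReal.ofReal_ne_top]
  exact lintegral_lintegral_swap (Measurable.aemeasurable (by fun_prop))

/-- Integral test for subcritical immigration (particle setting):
`∫_0^{z₀} z⁻¹ ∫ (1 - e^{-zW}) dP dz < ∞ ↔ ∫ log(1 + W) dP < ∞`. -/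
theorem integral_test_iff_log_moment {Ω : Type*} [MeasurableSpace Ω]
    (P : Measure Ω) [IsProbabilityMeasure P]
    (W : Ω → ℝ) (hW : Measurable W) (hWnn : ∀ ω, 0 ≤ W ω)
    (z₀ : ℝ) (hz₀ : 0 < z₀) :
    (∫⁻ z in Set.Ioo (0:ℝ) z₀,
        ENNReal.ofReal z⁻¹ * ∫⁻ ω, ENNReal.ofReal (1 - Real.exp (-(z * W ω))) ∂P) < ⊤ ↔
      (∫⁻ ω, ENNReal.ofReal (Real.log (1 + W ω)) ∂P) < ⊤ := by
  rw [lintegral_inv_mul_lintegral_one_sub_exp P hW]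
  constructor
  · refine lintegral_lt_top_of_le_mul_add (D := ENNReal.ofReal (log (max 1 z₀⁻¹)))
      ENNReal.one_ne_top ENNReal.ofReal_ne_top fun ω => ?_
    calc ENNReal.ofReal (log (1 + W ω))
        = ENNReal.ofReal (log (1 + W ω * z₀ * z₀⁻¹)) := by rw [mul_inv_cancel_right₀ hz₀.ne']
      _ ≤ ENNReal.ofReal (log (1 + W ω * z₀)) + ENNReal.ofReal (log (max 1 z₀⁻¹)) :=
        ofReal_log_one_add_mul_le (inv_pos.2 hz₀) (mul_nonneg (hWnn ω) hz₀.le)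
      _ ≤ 1 * einIntegral z₀ (W ω) + ENNReal.ofReal (log (max 1 z₀⁻¹)) := by
        rw [one_mul]; gcongr; exact ofReal_log_le_einIntegral hz₀.le (hWnn ω)
  · refine lintegral_lt_top_of_le_mul_add (C := 2) (D := 2 * ENNReal.ofReal (log (max 1 z₀)))
      (by finiteness) (by finiteness) fun ω => ?_
    calc einIntegral z₀ (W ω) ≤ 2 * ENNReal.ofReal (log (1 + W ω * z₀)) :=
        einIntegral_le_two_mul_ofReal_log hz₀.le (hWnn ω)
      _ ≤ 2 * (ENNReal.ofReal (log (1 + W ω)) + ENNReal.ofReal (log (max 1 z₀))) := by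
        gcongr; exact ofReal_log_one_add_mul_le hz₀ (hWnn ω)
      _ = _ := mul_add _ _ _
end

section
/- Let B > 0 and θ > 0, and let F : ℝ × ℝ → ℝ be a function with the property that for every ε > 0 there exists K > 0 such that |F(s, t)| ≤ ε s + K for all 0 ≤ s ≤ t. Then lim_{t → ∞} ∫_0^t ( t/θ + B s + F(s, t) )^{-1} ds = (1/B) log(1 + θ B) (in particular, for all sufficiently large t the integrand is well defined and positive on [0, t]). -/
/-!
For `0 < ε ≤ B` the growth bound on `F` traps the denominator, for large `t` and `s ∈ [0, t]`,
between the affine functions `t / θ ∓ K + (B ∓ ε) s`. Their reciprocals integrate explicitly to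
`(B ∓ ε)⁻¹ log (1 + (B ∓ ε) t / (t / θ ∓ K))`, which tends to `(B ∓ ε)⁻¹ log (1 + θ (B ∓ ε))`.
Letting `ε → 0` and using continuity of `b ↦ b⁻¹ log (1 + θ b)` at `B` squeezes the integral.
-/

open MeasureTheory Filter Set Topology

theorem tendsto_of_forall_squeeze {α ι β : Type*} [TopologicalSpace β] [LinearOrder β]
    [OrderTopology β] {l : Filter α} {p : Filter ι} [p.NeBot] {f : α → β} {L : β}
    {g h : ι → α → β} {a b : ι → β} (ha : Tendsto a p (𝓝 L)) (hb : Tendsto b p (𝓝 L))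
    (hg : ∀ᶠ i in p, Tendsto (g i) l (𝓝 (a i))) (hh : ∀ᶠ i in p, Tendsto (h i) l (𝓝 (b i)))
    (hgfh : ∀ᶠ i in p, ∀ᶠ x in l, g i x ≤ f x ∧ f x ≤ h i x) :
    Tendsto f l (𝓝 L) := by
  refine tendsto_order.2 ⟨fun c hc => ?_, fun c hc => ?_⟩
  · obtain ⟨i, hca, hgi, hi⟩ := ((ha.eventually (lt_mem_nhds hc)).and (hg.and hgfh)).exists
    filter_upwards [hgi.eventually (lt_mem_nhds hca), hi] with x hcg hgf
    exact hcg.trans_le hgf.1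
  · obtain ⟨i, hbc, hhi, hi⟩ := ((hb.eventually (gt_mem_nhds hc)).and (hh.and hgfh)).exists
    filter_upwards [hhi.eventually (gt_mem_nhds hbc), hi] with x hhc hfh
    exact hfh.2.trans_lt hhc

theorem intervalIntegrable_inv_of_le {f g : ℝ → ℝ} {a b : ℝ} (hab : a ≤ b) (hf : Measurable f)
    (hg : ContinuousOn g (Icc a b)) (hg0 : ∀ s ∈ Icc a b, 0 < g s)
    (hgf : ∀ s ∈ Icc a b, g s ≤ f s) :
    IntervalIntegrable (fun s => (f s)⁻¹) volume a b := by
  refine ((hg.inv₀ fun s hs => (hg0 s hs).ne').intervalIntegrable_of_Icc hab).mono_fun'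
    hf.inv.aestronglyMeasurable ((ae_restrict_iff' measurableSet_uIoc).2 (ae_of_all _ ?_))
  intro s hs
  rw [uIoc_of_le hab] at hs
  have hs' := Ioc_subset_Icc_self hs
  show ‖(f s)⁻¹‖ ≤ (g s)⁻¹
  rw [Real.norm_eq_abs, abs_of_pos (inv_pos.2 ((hg0 s hs').trans_le (hgf s hs')))]
  exact inv_anti₀ (hg0 s hs') (hgf s hs')

theorem integral_inv_const_add_mul {b c t : ℝ} (hb : 0 < b) (hc : 0 < c) (ht : 0 ≤ t) :
    ∫ s in (0:ℝ)..t, (c + b * s)⁻¹ = b⁻¹ * Real.log ((c + b * t) / c) := by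
  rw [intervalIntegral.integral_comp_add_mul (fun x => x⁻¹) hb.ne', mul_zero, add_zero,
    integral_inv_of_pos hc (by positivity), smul_eq_mul]

theorem tendsto_integral_inv_affine {θ b : ℝ} (hθ : 0 < θ) (hb : 0 < b) (K : ℝ) :
    Tendsto (fun t => ∫ s in (0:ℝ)..t, (t / θ + K + b * s)⁻¹) atTop
      (𝓝 (b⁻¹ * Real.log (1 + θ * b))) := by
  have hden : Tendsto (fun t : ℝ => θ⁻¹ + K / t) atTop (𝓝 θ⁻¹) := by
    simpa using tendsto_const_nhds.add
      (tendsto_const_nhds.div_atTop (tendsto_id (x := (atTop : Filter ℝ))))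
  have hratio : Tendsto (fun t : ℝ => 1 + b / (θ⁻¹ + K / t)) atTop (𝓝 (1 + θ * b)) := by
    have := tendsto_const_nhds (x := (1 : ℝ)) |>.add
      (tendsto_const_nhds (x := b) |>.div hden (inv_ne_zero hθ.ne'))
    rwa [div_inv_eq_mul, mul_comm] at this
  refine ((hratio.log (by positivity)).const_mul b⁻¹).congr' ?_
  filter_upwards [eventually_gt_atTop (θ * |K|)] with t ht
  have hc : 0 < t / θ + K := by linarith [neg_abs_le K, (lt_div_iff₀' hθ).2 ht]
  have ht0 : 0 < t := lt_of_le_of_lt (by positivity) ht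
  rw [integral_inv_const_add_mul hb hc ht0.le, add_div, div_self hc.ne']
  field_simp

section

variable {θ B ε K : ℝ} {F : ℝ × ℝ → ℝ}

theorem eventually_forall_Icc_affine_bounds (hθ : 0 < θ) (hεB : ε ≤ B)
    (hFK : ∀ s t : ℝ, 0 ≤ s → s ≤ t → |F (s, t)| ≤ ε * s + K) :
    ∀ᶠ t in atTop, ∀ s ∈ Icc 0 t, 0 < t / θ - K + (B - ε) * s ∧
      t / θ - K + (B - ε) * s ≤ t / θ + B * s + F (s, t) ∧
      t / θ + B * s + F (s, t) ≤ t / θ + K + (B + ε) * s := by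
  filter_upwards [eventually_gt_atTop (θ * |K|)] with t ht s ⟨hs0, hst⟩
  have hK : K < t / θ := (le_abs_self K).trans_lt ((lt_div_iff₀' hθ).2 ht)
  obtain ⟨hFlo, hFhi⟩ := abs_le.1 (hFK s t hs0 hst)
  exact ⟨by nlinarith, by nlinarith, by nlinarith⟩

theorem eventually_integral_inv_sandwich (hθ : 0 < θ) (hεB : ε ≤ B)
    (hFmeas : ∀ t, Measurable fun s => F (s, t))
    (hFK : ∀ s t : ℝ, 0 ≤ s → s ≤ t → |F (s, t)| ≤ ε * s + K) :
    ∀ᶠ t in atTop,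
      ∫ s in (0:ℝ)..t, (t / θ + K + (B + ε) * s)⁻¹ ≤
        ∫ s in (0:ℝ)..t, (t / θ + B * s + F (s, t))⁻¹ ∧
      ∫ s in (0:ℝ)..t, (t / θ + B * s + F (s, t))⁻¹ ≤
        ∫ s in (0:ℝ)..t, (t / θ - K + (B - ε) * s)⁻¹ := by
  filter_upwards [eventually_ge_atTop 0, eventually_forall_Icc_affine_bounds hθ hεB hFK]
    with t ht hbounds
  have hD : Measurable fun s => t / θ + B * s + F (s, t) :=
    (measurable_const.add (measurable_id.const_mul B)).add (hFmeas t)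
  have hlo_pos (s) (hs : s ∈ Icc 0 t) : 0 < t / θ - K + (B - ε) * s := (hbounds s hs).1
  have hD_pos (s) (hs : s ∈ Icc 0 t) : 0 < t / θ + B * s + F (s, t) :=
    (hlo_pos s hs).trans_le (hbounds s hs).2.1
  have hhi_pos (s) (hs : s ∈ Icc 0 t) : 0 < t / θ + K + (B + ε) * s :=
    (hD_pos s hs).trans_le (hbounds s hs).2.2
  have hD_int := intervalIntegrable_inv_of_le ht hD (by fun_prop) hlo_pos
    fun s hs => (hbounds s hs).2.1
  refine ⟨intervalIntegral.integral_mono_on ht ?_ hD_int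
      fun s hs => inv_anti₀ (hD_pos s hs) (hbounds s hs).2.2,
    intervalIntegral.integral_mono_on ht hD_int ?_
      fun s hs => inv_anti₀ (hlo_pos s hs) (hbounds s hs).2.1⟩
  · exact (ContinuousOn.inv₀ (by fun_prop) fun s hs => (hhi_pos s hs).ne').intervalIntegrable_of_Icc
      ht
  · exact (ContinuousOn.inv₀ (by fun_prop) fun s hs => (hlo_pos s hs).ne').intervalIntegrable_of_Icc
      ht

end

/-- Perturbed integral limit: if `|F(s,t)| ≤ ε s + K(ε)` for `0 ≤ s ≤ t`, then for `B, θ > 0`,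
`∫_0^t (t/θ + B s + F(s,t))⁻¹ ds → B⁻¹ log(1 + θ B)` as `t → ∞`, and for all sufficiently
large `t` the integrand is positive on `[0, t]`. -/
theorem perturbed_integral_limit (B θ : ℝ) (hB : 0 < B) (hθ : 0 < θ)
    (F : ℝ × ℝ → ℝ) (hFmeas : ∀ t, Measurable fun s => F (s, t))
    (hF : ∀ ε : ℝ, 0 < ε → ∃ K : ℝ, 0 < K ∧
      ∀ s t : ℝ, 0 ≤ s → s ≤ t → |F (s, t)| ≤ ε * s + K) :
    (∀ᶠ t in atTop, ∀ s ∈ Set.Icc (0:ℝ) t, 0 < t / θ + B * s + F (s, t)) ∧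
    Tendsto (fun t : ℝ => ∫ s in (0:ℝ)..t, (t / θ + B * s + F (s, t))⁻¹)
      atTop (nhds (B⁻¹ * Real.log (1 + θ * B))) := by
  constructor
  · obtain ⟨K, -, hFK⟩ := hF B hB
    filter_upwards [eventually_forall_Icc_affine_bounds hθ le_rfl hFK] with t hbounds s hs
    exact (hbounds s hs).1.trans_le (hbounds s hs).2.1
  choose! K _ hFK using hF
  have hG : ContinuousAt (fun b => b⁻¹ * Real.log (1 + θ * b)) B := by
    fun_prop (disch := positivity)
  have hε : ∀ᶠ ε in 𝓝[>] (0 : ℝ), ε ∈ Ioo 0 B := Ioo_mem_nhdsGT hB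
  refine tendsto_of_forall_squeeze (p := 𝓝[>] (0 : ℝ))
    (g := fun ε t => ∫ s in (0:ℝ)..t, (t / θ + K ε + (B + ε) * s)⁻¹)
    (h := fun ε t => ∫ s in (0:ℝ)..t, (t / θ - K ε + (B - ε) * s)⁻¹)
    (hG.tendsto.comp (((continuous_const_add B).tendsto' 0 B (add_zero B)).mono_left
      nhdsWithin_le_nhds))
    (hG.tendsto.comp (((continuous_sub_left B).tendsto' 0 B (sub_zero B)).mono_left
      nhdsWithin_le_nhds)) ?_ ?_ ?_
  · filter_upwards [hε] with ε hεI
    exact tendsto_integral_inv_affine hθ (add_pos hB hεI.1) (K ε)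
  · filter_upwards [hε] with ε hεI
    simpa only [Function.comp_apply, sub_eq_add_neg] using
      tendsto_integral_inv_affine hθ (sub_pos.2 hεI.2) (-K ε)
  · filter_upwards [hε] with ε ⟨hε0, hεB⟩
    exact eventually_integral_inv_sandwich hθ hεB.le hFmeas (hFK ε hε0)
end
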